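/- Let v be a flat complete simple game on N = {1,…,n}. Then the raw Public Good index satisfies the dominance property on v: for all players i, j with i ⊒ j one has PGI^r_i(v) ≥ PGI^r_j(v). -/

import Mathlib

open scoped Classical

/-- A simple game on the player set `{1,…,n}` (modeled as `Fin n`):
a monotone map from coalitions to `{0,1}` (modeled as `Bool`) that is
`0` on the empty coalition and `1` on the grand coalition. -/
structure SimpleGame (n : ℕ) where
  win : Finset (Fin n) → Bool
  win_empty : win ∅ = false
  win_univ : win Finset.univ = true
  win_mono : ∀ ⦃S T : Finset (Fin n)⦄, S ⊆ T → win S = true → win T = true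

namespace SimpleGame

variable {n : ℕ}

/-- Player `i` dominates player `j`: `v((S ∪ {i}) \ {j}) ≥ v(S)` for every
coalition `S` with `j ∈ S` and `i ∉ S`. -/
def Dominates (v : SimpleGame n) (i j : Fin n) : Prop :=
  ∀ S : Finset (Fin n), j ∈ S → i ∉ S → v.win S ≤ v.win ((S ∪ {i}) \ {j})

/-- The game is complete if the dominance relation is a total preorder. -/
def IsComplete (v : SimpleGame n) : Prop :=
  (∀ i, v.Dominates i i) ∧
  (∀ i j, v.Dominates i j ∨ v.Dominates j i) ∧
  (∀ i j k, v.Dominates i j → v.Dominates j k → v.Dominates i k)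

/-- `S` is a minimal winning coalition: winning and every proper subset is losing. -/
def IsMWC (v : SimpleGame n) (S : Finset (Fin n)) : Prop :=
  v.win S = true ∧ ∀ T ⊂ S, v.win T = false

/-- `M_i`: the set of minimal winning coalitions containing player `i`. -/
noncomputable def Mset (v : SimpleGame n) (i : Fin n) : Finset (Finset (Fin n)) :=
  Finset.univ.filter fun S => v.IsMWC S ∧ i ∈ S

/-- `M_i(l)`: minimal winning coalitions of cardinality `l` containing `i`. -/
noncomputable def Mlset (v : SimpleGame n) (i : Fin n) (l : ℕ) : Finset (Finset (Fin n)) :=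
  (v.Mset i).filter fun S => S.card = l

/-- Raw Public Good index: `PGI^r_i(v) = |M_i|`. -/
noncomputable def PGI (v : SimpleGame n) (i : Fin n) : ℕ := (v.Mset i).card

/-- Raw Deegan-Packel index: `DP^r_i(v) = Σ_{S ∈ M_i} 1/|S|`. -/
noncomputable def DP (v : SimpleGame n) (i : Fin n) : ℝ :=
  ∑ S ∈ v.Mset i, (1 : ℝ) / (S.card : ℝ)

/-- The game is uniform if all minimal winning coalitions have the same cardinality. -/
def IsUniform (v : SimpleGame n) : Prop :=
  ∀ S T, v.IsMWC S → v.IsMWC T → S.card = T.card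

/-- `[q; w]` is a weighted representation of `v`. -/
def IsWeightedRep (v : SimpleGame n) (q : ℝ) (w : Fin n → ℝ) : Prop :=
  0 < q ∧ (∀ i, 0 ≤ w i) ∧ ∀ S : Finset (Fin n), v.win S = true ↔ q ≤ ∑ i ∈ S, w i

/-- The game is weighted. -/
def IsWeighted (v : SimpleGame n) : Prop := ∃ q w, v.IsWeightedRep q w

/-- `D_i`: coalitions decisive for player `i`. -/
noncomputable def Dset (v : SimpleGame n) (i : Fin n) : Finset (Finset (Fin n)) :=
  Finset.univ.filter fun S => i ∈ S ∧ v.win S = true ∧ v.win (S.erase i) = false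

/-- Raw Banzhaf index: `Bz^r_i(v) = |D_i|`. -/
noncomputable def Bz (v : SimpleGame n) (i : Fin n) : ℕ := (v.Dset i).card

/-- `S` is a shift-minimal winning coalition. -/
def IsSMWC (v : SimpleGame n) (S : Finset (Fin n)) : Prop :=
  v.IsMWC S ∧ ∀ i ∈ S, ∀ j ∉ S, v.Dominates i j → ¬ v.Dominates j i →
    v.win ((S \ {i}) ∪ {j}) = false

/-- `𝒮_i`: the set of shift-minimal winning coalitions containing player `i`. -/
noncomputable def Sset (v : SimpleGame n) (i : Fin n) : Finset (Finset (Fin n)) :=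
  Finset.univ.filter fun S => v.IsSMWC S ∧ i ∈ S

/-- Raw Shift index: `S^r_i(v) = |𝒮_i|`. -/
noncomputable def ShiftIdx (v : SimpleGame n) (i : Fin n) : ℕ := (v.Sset i).card

/-- The number of players for which the coalition `S` is decisive. -/
noncomputable def numDecisive (v : SimpleGame n) (S : Finset (Fin n)) : ℕ :=
  (Finset.univ.filter fun k => k ∈ S ∧ v.win S = true ∧ v.win (S.erase k) = false).card

/-- Raw Johnston index: `Jo^r_i(v) = Σ_{S ∈ D_i} 1/#{decisive players of S}`. -/
noncomputable def Jo (v : SimpleGame n) (i : Fin n) : ℝ :=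
  ∑ S ∈ v.Dset i, (1 : ℝ) / (v.numDecisive S : ℝ)

/-- `i` is a null player: it belongs to no minimal winning coalition. -/
def IsNull (v : SimpleGame n) (i : Fin n) : Prop := ∀ S, v.IsMWC S → i ∉ S

end SimpleGame

/-- A power index: assigns to every `n`-player simple game a vector in `ℝ^n`. -/
abbrev PowerIndex : Type := ∀ n : ℕ, SimpleGame n → Fin n → ℝ

/-- A class of games (one set of games for every number of players). -/
abbrev GameClass : Type := ∀ n : ℕ, Set (SimpleGame n)

/-- Convex combination `P^α = Σ_h α_h P^h` of power indices. -/
noncomputable def convexComb {r : ℕ} (α : Fin r → ℝ) (P : Fin r → PowerIndex) : PowerIndex :=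
  fun n v i => ∑ h, α h * P h n v i

/-- `Q` satisfies local monotonicity on the `n`-player games of `𝔊`. -/
def LMon (𝔊 : GameClass) (n : ℕ) (Q : PowerIndex) : Prop :=
  ∀ v ∈ 𝔊 n, ∀ i j : Fin n, v.Dominates i j → Q n v j ≤ Q n v i

/-- The cost of local monotonicity `c_𝒫(n,𝔊)`. -/
noncomputable def costLM {r : ℕ} [NeZero r] (P : Fin r → PowerIndex) (n : ℕ)
    (𝔊 : GameClass) : ℝ :=
  sInf {β : ℝ | β ∈ Set.Icc (0 : ℝ) 1 ∧
    ∀ α ∈ stdSimplex ℝ (Fin r), β ≤ α 0 → LMon 𝔊 n (convexComb α P)}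

/-- The raw Banzhaf index as a power index. -/
noncomputable def BzPI : PowerIndex := fun _ v i => (v.Bz i : ℝ)

/-- The raw Public Good index as a power index. -/
noncomputable def PGIPI : PowerIndex := fun _ v i => (v.PGI i : ℝ)

/-- The raw Shift index as a power index. -/
noncomputable def ShiftPI : PowerIndex := fun _ v i => (v.ShiftIdx i : ℝ)

/-- The raw Johnston index as a power index. -/
noncomputable def JoPI : PowerIndex := fun _ v i => v.Jo i

/-- The raw Deegan-Packel index as a power index. -/
noncomputable def DPPI : PowerIndex := fun _ v i => v.DP i

/-- `𝔚`: the class of weighted games. -/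
def WeightedClass : GameClass := fun _ => {v | v.IsWeighted}

/-- The layer relation `i ≿ j`: for every `k = 1,…,n` the partial sums
`Σ_{l=1}^k |M_i(l)|` dominate those of `j`. -/
def SimpleGame.LayerGE {n : ℕ} (v : SimpleGame n) (i j : Fin n) : Prop :=
  ∀ k ∈ Finset.Icc 1 n,
    ∑ l ∈ Finset.Icc 1 k, (v.Mlset j l).card ≤ ∑ l ∈ Finset.Icc 1 k, (v.Mlset i l).card

/-- The game is flat if any two players are comparable under the layer relation. -/
def SimpleGame.IsFlat {n : ℕ} (v : SimpleGame n) : Prop :=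
  ∀ i j : Fin n, v.LayerGE i j ∨ v.LayerGE j i

/-
If `i` dominates `j`, the exchange `S ↦ (S ∪ {i}) \ {j}` keeps coalitions containing `j` but not `i`
winning. When `i ≿ j`, the claim is the layer inequality at `k = n`. When `j ≿ i`, induction on `k`
shows that the exchange maps the minimal winning coalitions of size `≤ k` containing `j` but not `i`
onto those containing `i` but not `j`: an image stays minimal, since a smaller minimal winning
subcoalition of it would, by induction, be the image of a smaller minimal winning subcoalition of
the original; and the layer inequality at `k` leaves no room for further coalitions on `i`'s side.
As the exchange is injective, `PGI i = PGI j`.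
-/

namespace Finset

variable {α : Type*} [DecidableEq α]

def exchange (i j : α) (S : Finset α) : Finset α := (S ∪ {i}) \ {j}

variable {i j : α} {S T : Finset α}

theorem exchange_mono (h : S ⊆ T) : exchange i j S ⊆ exchange i j T :=
  sdiff_subset_sdiff (union_subset_union h le_rfl) le_rfl

theorem mem_exchange_self (hij : i ≠ j) : i ∈ exchange i j S := by
  simp [exchange, hij]

theorem notMem_exchange : j ∉ exchange i j S := by
  simp [exchange]

theorem card_exchange (hjS : j ∈ S) (hiS : i ∉ S) : (exchange i j S).card = S.card := by
  rw [exchange, union_singleton, sdiff_singleton_eq_erase,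
    card_erase_of_mem (mem_insert_of_mem hjS), card_insert_of_notMem hiS, Nat.add_sub_cancel]

theorem exchange_exchange (hjS : j ∈ S) (hiS : i ∉ S) : exchange j i (exchange i j S) = S := by
  ext x
  by_cases hxi : x = i <;> by_cases hxj : x = j <;> simp_all [exchange]

theorem subset_of_subset_exchange (hT : T ⊆ exchange i j S) (hiT : i ∉ T) : T ⊆ S := by
  intro x hx
  have := hT hx
  simp only [exchange, mem_sdiff, mem_union, mem_singleton] at this
  rcases this.1 with h | rfl
  · exact h
  · exact absurd hx hiT

theorem injOn_exchange (i j : α) :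
    Set.InjOn (exchange i j) {S : Finset α | j ∈ S ∧ i ∉ S} :=
  fun S hS T hT hST => by
    rw [← exchange_exchange hS.1 hS.2, hST, exchange_exchange hT.1 hT.2]

end Finset

namespace SimpleGame

open Finset

variable {n : ℕ} {v : SimpleGame n}

theorem mem_mset {p : Fin n} {S : Finset (Fin n)} : S ∈ v.Mset p ↔ v.IsMWC S ∧ p ∈ S := by
  simp [Mset]

theorem exists_isMWC_subset {S : Finset (Fin n)} (hS : v.win S = true) :
    ∃ T ⊆ S, v.IsMWC T := by
  induction S using Finset.strongInduction with
  | H S ih =>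
    by_cases hmin : ∀ T ⊂ S, v.win T = false
    · exact ⟨S, Subset.rfl, hS, hmin⟩
    · push Not at hmin
      obtain ⟨T, hTS, hT⟩ := hmin
      obtain ⟨U, hUT, hU⟩ := ih T hTS (by simpa using hT)
      exact ⟨U, hUT.trans hTS.subset, hU⟩

theorem isMWC_of_forall {S : Finset (Fin n)} (hS : v.win S = true)
    (hmin : ∀ U, v.IsMWC U → U ⊆ S → U = S) : v.IsMWC S := by
  refine ⟨hS, fun T hTS => ?_⟩
  by_contra hT
  obtain ⟨U, hUT, hU⟩ := exists_isMWC_subset (by simpa using hT)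
  exact (hUT.trans_ssubset hTS).ne (hmin U hU (hUT.trans hTS.subset))

theorem IsMWC.eq_of_subset {S T : Finset (Fin n)} (hS : v.IsMWC S) (hT : v.IsMWC T)
    (hTS : T ⊆ S) : T = S := by
  by_contra hne
  have := hS.2 T (hTS.ssubset_of_ne hne)
  simp [hT.1] at this

theorem IsMWC.card_pos {S : Finset (Fin n)} (hS : v.IsMWC S) : 0 < S.card := by
  rw [Finset.card_pos, nonempty_iff_ne_empty]
  rintro rfl
  exact absurd hS.1 (by simp [v.win_empty])

theorem sum_card_mlset_Icc (p : Fin n) (k : ℕ) :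
    ∑ l ∈ Icc 1 k, (v.Mlset p l).card = ((v.Mset p).filter (·.card ≤ k)).card := by
  rw [card_eq_sum_card_fiberwise (f := Finset.card) (t := Icc 1 k)]
  · refine sum_congr rfl fun l hl => congrArg card ?_
    rw [filter_filter, Mlset]
    refine filter_congr fun S _ => ?_
    constructor
    · rintro rfl; exact ⟨(mem_Icc.mp hl).2, rfl⟩
    · exact fun h => h.2
  · intro S hS
    rw [mem_coe, mem_filter, mem_mset] at hS
    exact mem_coe.mpr <| mem_Icc.mpr ⟨hS.1.1.card_pos, hS.2⟩

theorem pgi_eq_sum_card_mlset (p : Fin n) : v.PGI p = ∑ l ∈ Icc 1 n, (v.Mlset p l).card := by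
  rw [sum_card_mlset_Icc, filter_true_of_mem fun S _ => card_finset_fin_le S, PGI]

theorem LayerGE.pgi_le {i j : Fin n} (h : v.LayerGE i j) : v.PGI j ≤ v.PGI i := by
  rw [pgi_eq_sum_card_mlset, pgi_eq_sum_card_mlset]
  exact h n (mem_Icc.mpr ⟨i.pos, le_rfl⟩)

variable (v) in
noncomputable def Mexcl (p q : Fin n) (k : ℕ) : Finset (Finset (Fin n)) :=
  (v.Mset p).filter fun S => q ∉ S ∧ S.card ≤ k

theorem card_filter_mset_eq_add (p q : Fin n) (k : ℕ) :
    ((v.Mset p).filter (·.card ≤ k)).card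
      = ((v.Mset p ∩ v.Mset q).filter (·.card ≤ k)).card + (v.Mexcl p q k).card := by
  rw [← card_filter_add_card_filter_not (p := (q ∈ ·)), filter_filter, filter_filter, Mexcl]
  congr 2
  · ext S; simp only [mem_filter, mem_inter, mem_mset]; tauto
  · ext S; simp only [mem_filter]; tauto

theorem pgi_eq_card_inter_add (p q : Fin n) :
    v.PGI p = (v.Mset p ∩ v.Mset q).card + (v.Mexcl p q n).card := by
  simpa only [PGI, filter_true_of_mem fun (S : Finset (Fin n)) _ => card_finset_fin_le S] using
    card_filter_mset_eq_add (v := v) p q n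

theorem LayerGE.card_mexcl_le {i j : Fin n} (h : v.LayerGE i j) {k : ℕ} (hk : k ≤ n) :
    (v.Mexcl j i k).card ≤ (v.Mexcl i j k).card := by
  rcases k.eq_zero_or_pos with rfl | hk0
  · rw [card_eq_zero.mpr]
    · exact Nat.zero_le _
    refine filter_false_of_mem fun S hS hS0 => ?_
    exact (mem_mset.mp hS).1.card_pos.ne' (Nat.le_zero.mp hS0.2)
  · have hlayer := h k (mem_Icc.mpr ⟨hk0, hk⟩)
    rw [sum_card_mlset_Icc, sum_card_mlset_Icc, card_filter_mset_eq_add j i,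
      card_filter_mset_eq_add i j, inter_comm] at hlayer
    omega

theorem Dominates.win_exchange {i j : Fin n} (hdom : v.Dominates i j) {S : Finset (Fin n)}
    (hS : v.win S = true) (hjS : j ∈ S) (hiS : i ∉ S) : v.win (exchange i j S) = true :=
  hdom S hjS hiS hS

theorem injOn_exchange_mexcl (i j : Fin n) (k : ℕ) :
    Set.InjOn (exchange i j) (v.Mexcl j i k) := fun S hS T hT => by
  simp only [coe_filter, Mexcl, mem_mset, Set.mem_ofPred_eq] at hS hT
  exact injOn_exchange i j ⟨hS.1.2, hS.2.1⟩ ⟨hT.1.2, hT.2.1⟩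

theorem Dominates.isMWC_exchange {i j : Fin n} (hdom : v.Dominates i j)
    {S : Finset (Fin n)} (hS : v.IsMWC S) (hjS : j ∈ S) (hiS : i ∉ S)
    (hsmaller : ∀ U, v.IsMWC U → i ∈ U → j ∉ U → U.card < S.card →
      ∃ S', v.IsMWC S' ∧ j ∈ S' ∧ i ∉ S' ∧ exchange i j S' = U) :
    v.IsMWC (exchange i j S) := by
  refine isMWC_of_forall (hdom.win_exchange hS.1 hjS hiS) fun U hU hUsub => ?_
  by_cases hiU : i ∈ U
  · by_contra hne
    have hcard : U.card < S.card :=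
      card_exchange hjS hiS ▸ card_lt_card (hUsub.ssubset_of_ne hne)
    obtain ⟨S', hS', hjS', hiS', rfl⟩ :=
      hsmaller U hU hiU (fun hjU => notMem_exchange (hUsub hjU)) hcard
    have hS'S : S' ⊆ S := by
      simpa only [exchange_exchange hjS' hiS', exchange_exchange hjS hiS] using
        exchange_mono (i := j) (j := i) hUsub
    exact hne (congrArg _ (hS.eq_of_subset hS' hS'S))
  · have hUS := hS.eq_of_subset hU (subset_of_subset_exchange hUsub hiU)
    exact absurd (hUsub (hUS ▸ hjS)) notMem_exchange

theorem Dominates.image_exchange_mexcl {i j : Fin n} (hdom : v.Dominates i j) (hij : i ≠ j)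
    (hcard : ∀ k ≤ n, (v.Mexcl i j k).card ≤ (v.Mexcl j i k).card) {k : ℕ} (hk : k ≤ n) :
    (v.Mexcl j i k).image (exchange i j) = v.Mexcl i j k := by
  induction k using Nat.strong_induction_on with
  | _ k ih =>
    have hsub : (v.Mexcl j i k).image (exchange i j) ⊆ v.Mexcl i j k := by
      refine image_subset_iff.mpr fun S hS => ?_
      simp only [Mexcl, mem_filter, mem_mset] at hS ⊢
      obtain ⟨⟨hS, hjS⟩, hiS, hSk⟩ := hS
      refine ⟨⟨hdom.isMWC_exchange hS hjS hiS fun U hU hiU hjU hUS => ?_,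
        mem_exchange_self hij⟩, notMem_exchange, card_exchange hjS hiS ▸ hSk⟩
      have hU : U ∈ v.Mexcl i j U.card :=
        mem_filter.mpr ⟨mem_mset.mpr ⟨hU, hiU⟩, hjU, le_rfl⟩
      rw [← ih U.card (by omega) (by omega)] at hU
      obtain ⟨S', hS', rfl⟩ := mem_image.mp hU
      obtain ⟨hS'M, hiS', -⟩ := mem_filter.mp hS'
      exact ⟨S', (mem_mset.mp hS'M).1, (mem_mset.mp hS'M).2, hiS', rfl⟩
    refine eq_of_subset_of_card_le hsub ?_
    rw [card_image_of_injOn (injOn_exchange_mexcl i j k)]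
    exact hcard k hk

end SimpleGame

theorem pgi_dominance_of_flat_complete_general {n : ℕ} (v : SimpleGame n)
    (hflat : v.IsFlat) (i j : Fin n)
    (hdom : v.Dominates i j) : v.PGI j ≤ v.PGI i := by
  rcases eq_or_ne i j with rfl | hij
  · exact le_rfl
  rcases hflat i j with hlayer_ij | hlayer_ji
  · exact hlayer_ij.pgi_le
  have himage := hdom.image_exchange_mexcl hij (fun _ hk => hlayer_ji.card_mexcl_le hk) le_rfl
  rw [SimpleGame.pgi_eq_card_inter_add i j, SimpleGame.pgi_eq_card_inter_add j i,
    Finset.inter_comm, ← himage,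
    Finset.card_image_of_injOn (SimpleGame.injOn_exchange_mexcl i j n)]

/-- For a flat complete simple game, the raw Public Good index
satisfies the dominance property. -/
theorem pgi_dominance_of_flat_complete {n : ℕ} (v : SimpleGame n)
    (hcomp : v.IsComplete) (hflat : v.IsFlat) (i j : Fin n)
    (hdom : v.Dominates i j) : v.PGI j ≤ v.PGI i :=
  pgi_dominance_of_flat_complete_general v hflat i j hdom
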